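/- arXiv:1206.5501 — 8 statements merged into one kernel-verified Lean document; each statement's English description precedes it below -/
import Mathlib

section
/- The multiplication map of the quaternion algebra over ℝ (with i² = −1, j² = −1, ij = −ji = k) admits a bilinear algorithm of length 8; that is, there exist linear functionals f₁,…,f₈ and g₁,…,g₈ on ℍ and elements z₁,…,z₈ ∈ ℍ such that for all u, v ∈ ℍ, u·v = ∑_{k=1}^{8} f_k(u)·g_k(v)·z_k. -/
/-!
Write `u = u₀ + u₁i + u₂j + u₃k` and `v` likewise. Since
`(a + b)(c + d) ± (a - b)(c - d)` is `2(ac + bd)` resp. `2(ad + bc)`, the four products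
`(u₁ ± u₃)(v₁ ± v₂)` and `(u₀ ± u₂)(v₀ ∓ v₃)` determine, through their half-sums and
half-differences, the forms `p = u₁v₁ + u₃v₂`, `q = u₁v₂ + u₃v₁`, `r = u₀v₀ - u₂v₃` and
`s = u₂v₀ - u₀v₃`. Each coordinate of `uv` is a signed sum of two of them plus one more product:
`re = r - p + (u₃ - u₂)(v₂ - v₃)`, `imI = (u₀ + u₁)(v₀ + v₁) - r - p`,
`imJ = q + s + (u₀ - u₁)(v₂ + v₃)` and `imK = q - s + (u₂ + u₃)(v₀ - v₁)`. Only the halving needs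
`2` to be invertible.
-/

open Quaternion

namespace Quaternion

variable {R : Type*} [CommRing R]

def coordForm (a b c d : R) : Module.Dual R ℍ[R] :=
  a • QuaternionAlgebra.reₗ (-1 : R) 0 (-1) + b • QuaternionAlgebra.imIₗ (-1 : R) 0 (-1)
    + c • QuaternionAlgebra.imJₗ (-1 : R) 0 (-1) + d • QuaternionAlgebra.imKₗ (-1 : R) 0 (-1)

@[simp]
theorem coordForm_apply (a b c d : R) (u : ℍ[R]) :
    coordForm a b c d u = a * u.re + b * u.imI + c * u.imJ + d * u.imK :=
  rfl

def eightMulLeftForms : Fin 8 → Module.Dual R ℍ[R] :=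
  ![coordForm 1 1 0 0, coordForm 0 0 (-1) 1, coordForm (-1) 1 0 0, coordForm 0 0 1 1,
    coordForm 0 1 0 1, coordForm 0 1 0 (-1), coordForm 1 0 1 0, coordForm 1 0 (-1) 0]

def eightMulRightForms : Fin 8 → Module.Dual R ℍ[R] :=
  ![coordForm 1 1 0 0, coordForm 0 0 1 (-1), coordForm 0 0 1 1, coordForm (-1) 1 0 0,
    coordForm 0 1 1 0, coordForm 0 1 (-1) 0, coordForm 1 0 0 (-1), coordForm 1 0 0 1]

def eightMulDoubledOutputs : Fin 8 → ℍ[R] :=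
  ![⟨0, 2, 0, 0⟩, ⟨2, 0, 0, 0⟩, ⟨0, 0, -2, 0⟩, ⟨0, 0, 0, -2⟩,
    ⟨-1, -1, 1, 1⟩, ⟨-1, -1, -1, -1⟩, ⟨1, -1, 1, -1⟩, ⟨1, -1, -1, 1⟩]

theorem two_smul_mul_eq_sum_eightMul (u v : ℍ[R]) :
    (2 : R) • (u * v) =
      ∑ k, (eightMulLeftForms k u * eightMulRightForms k v) • eightMulDoubledOutputs k := by
  ext <;>
    simp only [Fin.sum_univ_eight, re_add, imI_add, imJ_add, imK_add, re_smul, imI_smul, imJ_smul,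
      imK_smul, re_mul, imI_mul, imJ_mul, imK_mul, smul_eq_mul] <;>
    simp [eightMulLeftForms, eightMulRightForms, eightMulDoubledOutputs] <;>
    ring

theorem mul_eq_sum_eightMul [Invertible (2 : R)] (u v : ℍ[R]) :
    u * v = ∑ k, (eightMulLeftForms k u * eightMulRightForms k v) •
      (⅟2 : R) • eightMulDoubledOutputs k := by
  rw [← one_smul R (u * v), ← invOf_mul_self (2 : R), mul_smul, two_smul_mul_eq_sum_eightMul,
    Finset.smul_sum]
  simp_rw [smul_comm (⅟2 : R)]

end Quaternion

theorem quaternion_mul_bilinear_algorithm_length_eight :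
    ∃ (f g : Fin 8 → Module.Dual ℝ ℍ[ℝ]) (z : Fin 8 → ℍ[ℝ]),
      ∀ u v : ℍ[ℝ], u * v = ∑ k : Fin 8, (f k u * g k v) • z k :=
  ⟨eightMulLeftForms, eightMulRightForms, fun k => (⅟2 : ℝ) • eightMulDoubledOutputs k,
    mul_eq_sum_eightMul⟩
end

section
/- Let F be a field with char F ≠ 2, and let H be a quaternion algebra over F with basis 1, i, j, k where i² = p, j² = q, ij = −ji = k, for p, q ∈ Fˣ. Fix nonzero α, β, γ ∈ F. Define z′₁ = 1+αi+βj+γk, z′₂ = 1+αi−βj−γk, z′₃ = 1−αi+βj−γk, z′₄ = 1−αi−βj+γk, and z″₁ = 1−αi−βj−γk, z″₂ = 1−αi+βj+γk, z″₃ = 1+αi−βj+γk, z″₄ = 1+αi+βj−γk. Then with u₁=v₁=1, u₂=v₂=i, u₃=v₃=j, u₄=v₄=k, for all indices 1 ≤ s,t ≤ 4, the product u_s·v_t lies in the F-linear span of {z′_s, z″_t}. -/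
/-!
`z''ₜ` is the conjugate of `z'ₜ`, so `z'ₛ + z''ₛ = 2`, and the square `uₛ²` is a scalar.
For `s ≠ t` the sign patterns of `z'ₛ` and `z'ₜ` agree in exactly one of the slots `i, j, k`,
so `z'ₛ - z''ₜ` is `±2α i`, `±2β j` or `±2γ k`, and `uₛ uₜ` is a scalar multiple of that same
basis element.
-/

open Quaternion Submodule

namespace Submodule

variable {R M : Type*} [Ring R] [AddCommGroup M] [Module R M]

theorem add_mem_span_pair (x y : M) : x + y ∈ span R {x, y} :=
  add_mem (subset_span (by simp)) (subset_span (by simp))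

theorem sub_mem_span_pair (x y : M) : x - y ∈ span R {x, y} :=
  sub_mem (subset_span (by simp)) (subset_span (by simp))

end Submodule

section

variable {F : Type*} [Field F]

def oneIJK (p q : F) : Fin 4 → ℍ[F,p,q] :=
  ![⟨1,0,0,0⟩, ⟨0,1,0,0⟩, ⟨0,0,1,0⟩, ⟨0,0,0,1⟩]

def zPrime (p q α β γ : F) : Fin 4 → ℍ[F,p,q] :=
  ![⟨1,α,β,γ⟩, ⟨1,α,-β,-γ⟩, ⟨1,-α,β,-γ⟩, ⟨1,-α,-β,γ⟩]

def zDoublePrime (p q α β γ : F) : Fin 4 → ℍ[F,p,q] :=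
  ![⟨1,-α,-β,-γ⟩, ⟨1,-α,β,γ⟩, ⟨1,α,-β,γ⟩, ⟨1,α,β,-γ⟩]

variable (p q α β γ : F)

theorem oneIJK_mul_self_mem_span_one (s : Fin 4) : oneIJK p q s * oneIJK p q s ∈ F ∙ 1 := by
  refine mem_span_singleton.2 ⟨(oneIJK p q s * oneIJK p q s).re, ?_⟩
  fin_cases s <;> ext <;> simp [oneIJK]

theorem zPrime_add_zDoublePrime_self (s : Fin 4) :
    zPrime p q α β γ s + zDoublePrime p q α β γ s = (2 : F) • 1 := by
  fin_cases s <;> ext <;> simp [zPrime, zDoublePrime] <;> ring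

theorem oneIJK_mul_self_mem_span (h2 : (2 : F) ≠ 0) (s : Fin 4) :
    oneIJK p q s * oneIJK p q s ∈ span F {zPrime p q α β γ s, zDoublePrime p q α β γ s} := by
  have hone : (1 : ℍ[F,p,q]) ∈ span F {zPrime p q α β γ s, zDoublePrime p q α β γ s} := by
    refine (smul_mem_iff _ h2).1 ?_
    rw [← zPrime_add_zDoublePrime_self p q α β γ s]
    exact add_mem_span_pair _ _
  exact span_singleton_le_iff_mem _ _ |>.2 hone (oneIJK_mul_self_mem_span_one p q s)

variable {α β γ} in
theorem oneIJK_mul_mem_span_sub (h2 : (2 : F) ≠ 0) (hα : α ≠ 0) (hβ : β ≠ 0) (hγ : γ ≠ 0)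
    {s t : Fin 4} (hst : s ≠ t) :
    oneIJK p q s * oneIJK p q t ∈ F ∙ (zPrime p q α β γ s - zDoublePrime p q α β γ t) := by
  -- `c s t`: the coefficient of `uₛ uₜ` over that of `z'ₛ - z''ₜ` on their common basis element
  let c : Fin 4 → Fin 4 → F :=
    ![![0, 1 / (2 * α), 1 / (2 * β), 1 / (2 * γ)],
      ![1 / (2 * α), 0, -1 / (2 * γ), -p / (2 * β)],
      ![1 / (2 * β), 1 / (2 * γ), 0, q / (2 * α)],
      ![1 / (2 * γ), p / (2 * β), -q / (2 * α), 0]]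
  refine mem_span_singleton.2 ⟨c s t, ?_⟩
  fin_cases s <;> fin_cases t <;> (try exact absurd rfl hst) <;>
    ext <;> simp [c, oneIJK, zPrime, zDoublePrime] <;> field_simp <;> ring

end

theorem quaternionAlgebra_products_in_span_general
    (F : Type*) [Field F] (hchar : (2 : F) ≠ 0)
    (p q : F)
    (α β γ : F) (hα : α ≠ 0) (hβ : β ≠ 0) (hγ : γ ≠ 0)
    (u : Fin 4 → ℍ[F,p,q]) (z' z'' : Fin 4 → ℍ[F,p,q])
    (hu : u = ![⟨1,0,0,0⟩, ⟨0,1,0,0⟩, ⟨0,0,1,0⟩, ⟨0,0,0,1⟩])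
    (hz' : z' = ![⟨1,α,β,γ⟩, ⟨1,α,-β,-γ⟩, ⟨1,-α,β,-γ⟩, ⟨1,-α,-β,γ⟩])
    (hz'' : z'' = ![⟨1,-α,-β,-γ⟩, ⟨1,-α,β,γ⟩, ⟨1,α,-β,γ⟩, ⟨1,α,β,-γ⟩]) :
    ∀ s t : Fin 4, u s * u t ∈ Submodule.span F {z' s, z'' t} := by
  subst hu hz' hz''
  intro s t
  rcases eq_or_ne s t with rfl | hst
  · exact oneIJK_mul_self_mem_span p q α β γ hchar s
  · exact span_singleton_le_iff_mem _ _ |>.2 (sub_mem_span_pair _ _)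
      (oneIJK_mul_mem_span_sub p q hchar hα hβ hγ hst)

theorem quaternionAlgebra_products_in_span
    (F : Type*) [Field F] (hchar : (2 : F) ≠ 0)
    (p q : F) (hp : p ≠ 0) (hq : q ≠ 0)
    (α β γ : F) (hα : α ≠ 0) (hβ : β ≠ 0) (hγ : γ ≠ 0)
    (u : Fin 4 → ℍ[F,p,q]) (z' z'' : Fin 4 → ℍ[F,p,q])
    (hu : u = ![⟨1,0,0,0⟩, ⟨0,1,0,0⟩, ⟨0,0,1,0⟩, ⟨0,0,0,1⟩])
    (hz' : z' = ![⟨1,α,β,γ⟩, ⟨1,α,-β,-γ⟩, ⟨1,-α,β,-γ⟩, ⟨1,-α,-β,γ⟩])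
    (hz'' : z'' = ![⟨1,-α,-β,-γ⟩, ⟨1,-α,β,γ⟩, ⟨1,α,-β,γ⟩, ⟨1,α,β,-γ⟩]) :
    ∀ s t : Fin 4, u s * u t ∈ Submodule.span F {z' s, z'' t} :=
  quaternionAlgebra_products_in_span_general F hchar p q α β γ hα hβ hγ u z' z'' hu hz' hz''
end

section
/- Let φ : U × V → W be a bilinear map between finite-dimensional vector spaces over a field F. Suppose there exist bases (u₁,…,u_m) of U and (v₁,…,v_n) of V, and elements z′₁,…,z′_m, z″₁,…,z″_n ∈ W such that φ(u_i, v_j) ∈ span{z′_i, z″_j} for all i, j. Then φ admits a bilinear algorithm of length at most m + n, i.e., there exist f_k ∈ U*, g_k ∈ V*, z_k ∈ W for k = 1,…,m+n with φ(u,v) = ∑_{k=1}^{m+n} f_k(u) g_k(v) z_k for all u ∈ U, v ∈ V. -/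
/-!
Write `φ (bU i) (bV j) = a i j • z' i + b i j • z'' j`. In coordinates `u = ∑ i, uᵢ • bU i`,
`v = ∑ j, vⱼ • bV j`, the map `φ` is then the sum of `∑ i, (uᵢ * ∑ j, a i j * vⱼ) • z' i` and
`∑ j, ((∑ i, b i j * uᵢ) * vⱼ) • z'' j`: `m` rank-one terms plus `n` rank-one terms.
-/

open Module

section BilinearAlgorithm

variable {R M N P : Type*} [CommSemiring R] [AddCommMonoid M] [AddCommMonoid N]
  [AddCommMonoid P] [Module R M] [Module R N] [Module R P] {ι κ : Type*} [Fintype ι] [Fintype κ]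

def bilinearAlgorithm (f : ι → Dual R M) (g : ι → Dual R N) (z : ι → P) :
    M →ₗ[R] N →ₗ[R] P :=
  ∑ k, (f k).smulRight ((g k).smulRight (z k))

@[simp]
theorem bilinearAlgorithm_apply (f : ι → Dual R M) (g : ι → Dual R N) (z : ι → P) (u : M) (v : N) :
    bilinearAlgorithm f g z u v = ∑ k, (f k u * g k v) • z k := by
  simp [bilinearAlgorithm, smul_smul]

theorem bilinearAlgorithm_addCases {m n : ℕ} (f₁ : Fin m → Dual R M) (f₂ : Fin n → Dual R M)
    (g₁ : Fin m → Dual R N) (g₂ : Fin n → Dual R N) (z₁ : Fin m → P) (z₂ : Fin n → P) :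
    bilinearAlgorithm (Fin.addCases f₁ f₂) (Fin.addCases g₁ g₂) (Fin.addCases z₁ z₂) =
      bilinearAlgorithm f₁ g₁ z₁ + bilinearAlgorithm f₂ g₂ z₂ := by
  simp [bilinearAlgorithm, Fin.sum_univ_add]

theorem bilinearAlgorithm_coord_left_apply_basis (bU : Basis ι R M) (g : ι → Dual R N)
    (z : ι → P) (i : ι) (v : N) :
    bilinearAlgorithm bU.coord g z (bU i) v = g i v • z i := by
  classical
  simp [Finsupp.single_apply]

theorem bilinearAlgorithm_coord_right_apply_basis (bV : Basis κ R N) (f : κ → Dual R M)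
    (z : κ → P) (u : M) (j : κ) :
    bilinearAlgorithm f bV.coord z u (bV j) = f j u • z j := by
  classical
  simp [Finsupp.single_apply]

theorem eq_bilinearAlgorithm_add_of_apply_basis (bU : Basis ι R M) (bV : Basis κ R N)
    (φ : M →ₗ[R] N →ₗ[R] P) (a b : ι → κ → R) (z' : ι → P) (z'' : κ → P)
    (hφ : ∀ i j, a i j • z' i + b i j • z'' j = φ (bU i) (bV j)) :
    φ = bilinearAlgorithm bU.coord (fun i => ∑ j, a i j • bV.coord j) z' +
      bilinearAlgorithm (fun j => ∑ i, b i j • bU.coord i) bV.coord z'' := by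
  classical
  refine LinearMap.ext_basis bU bV fun i j => ?_
  rw [LinearMap.add_apply, LinearMap.add_apply, bilinearAlgorithm_coord_left_apply_basis,
    bilinearAlgorithm_coord_right_apply_basis, ← hφ]
  simp [Finsupp.single_apply]

end BilinearAlgorithm

theorem two_component_condition_gives_algorithm_general
    (F : Type*) [Field F]
    (U V W : Type*) [AddCommGroup U] [AddCommGroup V] [AddCommGroup W]
    [Module F U] [Module F V] [Module F W]
    (m n : ℕ)
    (φ : U →ₗ[F] V →ₗ[F] W)
    (bU : Module.Basis (Fin m) F U) (bV : Module.Basis (Fin n) F V)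
    (z' : Fin m → W) (z'' : Fin n → W)
    (h : ∀ i j, φ (bU i) (bV j) ∈ Submodule.span F {z' i, z'' j}) :
    ∃ (f : Fin (m + n) → Module.Dual F U) (g : Fin (m + n) → Module.Dual F V)
      (z : Fin (m + n) → W),
      ∀ u v, φ u v = ∑ k : Fin (m + n), (f k u * g k v) • z k := by
  choose a b hab using fun i j => Submodule.mem_span_pair.mp (h i j)
  refine ⟨Fin.addCases bU.coord fun j => ∑ i, b i j • bU.coord i,
    Fin.addCases (fun i => ∑ j, a i j • bV.coord j) bV.coord, Fin.addCases z' z'', fun u v => ?_⟩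
  rw [← bilinearAlgorithm_apply, bilinearAlgorithm_addCases,
    ← eq_bilinearAlgorithm_add_of_apply_basis bU bV φ a b z' z'' hab]

theorem two_component_condition_gives_algorithm
    (F : Type*) [Field F]
    (U V W : Type*) [AddCommGroup U] [AddCommGroup V] [AddCommGroup W]
    [Module F U] [Module F V] [Module F W]
    [FiniteDimensional F U] [FiniteDimensional F V] [FiniteDimensional F W]
    (m n : ℕ) (hm : Module.finrank F U = m) (hn : Module.finrank F V = n)
    (φ : U →ₗ[F] V →ₗ[F] W)
    (bU : Module.Basis (Fin m) F U) (bV : Module.Basis (Fin n) F V)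
    (z' : Fin m → W) (z'' : Fin n → W)
    (h : ∀ i j, φ (bU i) (bV j) ∈ Submodule.span F {z' i, z'' j}) :
    ∃ (f : Fin (m + n) → Module.Dual F U) (g : Fin (m + n) → Module.Dual F V)
      (z : Fin (m + n) → W),
      ∀ u v, φ u v = ∑ k : Fin (m + n), (f k u * g k v) • z k :=
  two_component_condition_gives_algorithm_general F U V W m n φ bU bV z' z'' h
end

section
/- Let φ : U × V → W be a bilinear map admitting a two-component bilinear algorithm. Then there exist bases (u₁,…,u_m) of U and (v₁,…,v_n) of V and elements z′₁,…,z′_m, z″₁,…,z″_n ∈ W such that φ(u_i, v_j) ∈ span{z′_i, z″_j} for all i, j. -/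
/-!
Take the basis `(u_i)_{i ∈ I}` of `U` dual to the basis `(f_i)_{i ∈ I}` of `U*` and the basis
`(v_j)_{j ∈ J}` of `V` dual to `(g_j)_{j ∈ J}`. In `φ(u_i, v_j) = ∑_k f_k(u_i) g_k(v_j) z_k`, a term
with `k ∈ I` vanishes unless `k = i`, and one with `k ∈ J` unless `k = j`; since `I` and `J`
partition the indices, `φ(u_i, v_j) = g_i(v_j) z_i + f_j(u_i) z_j`, so `z'_i = z_i`, `z''_j = z_j`.
-/

open Module

section DualBasis

variable {F U : Type*} [Field F] [AddCommGroup U] [Module F U] [FiniteDimensional F U]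

theorem Module.Basis.exists_basis_apply_eq_ite {ι : Type*} [Finite ι] [DecidableEq ι]
    (b : Basis ι F (Dual F U)) :
    ∃ e : Basis ι F U, ∀ k i, b k (e i) = if k = i then 1 else 0 := by
  refine ⟨b.dualBasis.map (evalEquiv F U).symm, fun k i => ?_⟩
  have heval : evalEquiv F U (b.dualBasis.map (evalEquiv F U).symm i) = b.dualBasis i := by
    simp [Basis.map_apply]
  rw [← Dual.eval_apply, ← evalEquiv_apply, heval, Basis.dualBasis_apply_self]

theorem exists_basis_apply_eq_ite_of_basis_image {ι : Type*} [DecidableEq ι]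
    (f : ι → Dual F U) (I : Finset ι) (hli : LinearIndependent F (fun i : I => f i))
    (hspan : Submodule.span F (f '' I) = ⊤) :
    ∃ e : Basis I F U, ∀ (i : I), ∀ k ∈ I, f k (e i) = if k = i then 1 else 0 := by
  have hspan' : ⊤ ≤ Submodule.span F (Set.range fun i : I => f i) := by
    rw [← hspan, Set.image_eq_range]; rfl
  obtain ⟨e, he⟩ := (Basis.mk hli hspan').exists_basis_apply_eq_ite
  refine ⟨e, fun i k hk => ?_⟩
  simpa [Subtype.ext_iff] using he ⟨k, hk⟩ i

end DualBasis

theorem Finset.sum_mul_smul_eq_add_of_eq_ite {ι F W : Type*} [Fintype ι] [DecidableEq ι]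
    [Semiring F] [AddCommMonoid W] [Module F W] {I J : Finset ι} (hdisj : Disjoint I J)
    (hunion : I ∪ J = univ) {a b : ι → F} {z : ι → W} {i j : ι} (hi : i ∈ I) (hj : j ∈ J)
    (ha : ∀ k ∈ I, a k = if k = i then 1 else 0) (hb : ∀ k ∈ J, b k = if k = j then 1 else 0) :
    ∑ k, (a k * b k) • z k = b i • z i + a j • z j := by
  rw [← hunion, sum_union hdisj, sum_eq_single_of_mem i hi, sum_eq_single_of_mem j hj]
  · simp [ha i hi, hb j hj]
  · intro k hk hkj; simp [hb k hk, hkj]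
  · intro k hk hki; simp [ha k hk, hki]

theorem two_component_algorithm_gives_span_condition_general
    (F : Type*) [Field F]
    (U V W : Type*) [AddCommGroup U] [AddCommGroup V] [AddCommGroup W]
    [Module F U] [Module F V] [Module F W]
    [FiniteDimensional F U] [FiniteDimensional F V]
    (m n : ℕ) (hm : Module.finrank F U = m) (hn : Module.finrank F V = n)
    (φ : U →ₗ[F] V →ₗ[F] W)
    (r : ℕ) (f : Fin r → Module.Dual F U) (g : Fin r → Module.Dual F V)
    (z : Fin r → W)
    (halg : ∀ u v, φ u v = ∑ k : Fin r, (f k u * g k v) • z k)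
    (I J : Finset (Fin r)) (hdisj : Disjoint I J) (hunion : I ∪ J = Finset.univ)
    (hfI : LinearIndependent F (fun i : I => f i))
    (hfIspan : Submodule.span F (f '' I) = ⊤)
    (hgJ : LinearIndependent F (fun j : J => g j))
    (hgJspan : Submodule.span F (g '' J) = ⊤) :
    ∃ (bU : Module.Basis (Fin m) F U) (bV : Module.Basis (Fin n) F V)
      (z' : Fin m → W) (z'' : Fin n → W),
      ∀ i j, φ (bU i) (bV j) ∈ Submodule.span F {z' i, z'' j} := by
  obtain ⟨eU, heU⟩ := exists_basis_apply_eq_ite_of_basis_image f I hfI hfIspan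
  obtain ⟨eV, heV⟩ := exists_basis_apply_eq_ite_of_basis_image g J hgJ hgJspan
  let σ : I ≃ Fin m := Fintype.equivFinOfCardEq (by rw [← finrank_eq_card_basis eU, hm])
  let τ : J ≃ Fin n := Fintype.equivFinOfCardEq (by rw [← finrank_eq_card_basis eV, hn])
  refine ⟨eU.reindex σ, eV.reindex τ, fun i => z (σ.symm i), fun j => z (τ.symm j),
    fun i j => ?_⟩
  rw [Basis.reindex_apply, Basis.reindex_apply, halg, Finset.sum_mul_smul_eq_add_of_eq_ite
    hdisj hunion (σ.symm i).2 (τ.symm j).2 (heU _) (heV _)]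
  exact Submodule.mem_span_pair.mpr ⟨_, _, rfl⟩

theorem two_component_algorithm_gives_span_condition
    (F : Type*) [Field F]
    (U V W : Type*) [AddCommGroup U] [AddCommGroup V] [AddCommGroup W]
    [Module F U] [Module F V] [Module F W]
    [FiniteDimensional F U] [FiniteDimensional F V] [FiniteDimensional F W]
    (m n : ℕ) (hm : Module.finrank F U = m) (hn : Module.finrank F V = n)
    (φ : U →ₗ[F] V →ₗ[F] W)
    (r : ℕ) (f : Fin r → Module.Dual F U) (g : Fin r → Module.Dual F V)
    (z : Fin r → W)
    (halg : ∀ u v, φ u v = ∑ k : Fin r, (f k u * g k v) • z k)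
    (I J : Finset (Fin r)) (hdisj : Disjoint I J) (hunion : I ∪ J = Finset.univ)
    (hfI : LinearIndependent F (fun i : I => f i))
    (hfIspan : Submodule.span F (f '' I) = ⊤)
    (hgJ : LinearIndependent F (fun j : J => g j))
    (hgJspan : Submodule.span F (g '' J) = ⊤) :
    ∃ (bU : Module.Basis (Fin m) F U) (bV : Module.Basis (Fin n) F V)
      (z' : Fin m → W) (z'' : Fin n → W),
      ∀ i j, φ (bU i) (bV j) ∈ Submodule.span F {z' i, z'' j} :=
  two_component_algorithm_gives_span_condition_general F U V W m n hm hn φ r f g z halg I J hdisj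
    hunion hfI hfIspan hgJ hgJspan
end

section
/- Let φ : U × V → W be a bilinear map, let u₀ ∈ U be left φ-regular, and let φ = ∑_{k=1}^r f_k ⊗ g_k ⊗ z_k be a bilinear algorithm. Then the functionals {g_k : f_k(u₀) ≠ 0} span V*. -/
/-! If `v` is killed by every `g k` with `f k u₀ ≠ 0`, then every term of `φ u₀ v` vanishes,
so `v = 0` by regularity. In finite dimension, functionals without a common nonzero zero
span the dual. -/

open Module

theorem Subspace.span_eq_top_of_forall_apply_eq_zero {K V : Type*} [Field K] [AddCommGroup V]
    [Module K V] [FiniteDimensional K V] {S : Set (Dual K V)}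
    (hS : ∀ v : V, (∀ s ∈ S, s v = 0) → v = 0) :
    Submodule.span K S = ⊤ := by
  have hcoann : (Submodule.span K S).dualCoannihilator = ⊥ :=
    (Submodule.eq_bot_iff _).mpr fun v hv =>
      hS v fun s hs => (Submodule.mem_dualCoannihilator v).mp hv s (Submodule.subset_span hs)
  rw [← Subspace.dualCoannihilator_dualAnnihilator_eq (W := Submodule.span K S), hcoann,
    Submodule.dualAnnihilator_bot]

theorem g_functionals_span_of_regular_element_general
    (F : Type*) [Field F]
    (U V W : Type*) [AddCommGroup U] [AddCommGroup V] [AddCommGroup W]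
    [Module F U] [Module F V] [Module F W]
    [FiniteDimensional F V]
    (φ : U →ₗ[F] V →ₗ[F] W)
    (u₀ : U) (hreg : Function.Injective fun v : V => φ u₀ v)
    (r : ℕ) (f : Fin r → Module.Dual F U) (g : Fin r → Module.Dual F V)
    (z : Fin r → W)
    (halg : ∀ u v, φ u v = ∑ k : Fin r, (f k u * g k v) • z k) :
    Submodule.span F (g '' {k : Fin r | f k u₀ ≠ 0}) = ⊤ := by
  refine Subspace.span_eq_top_of_forall_apply_eq_zero fun v hv => hreg ?_
  show φ u₀ v = φ u₀ 0
  rw [map_zero, halg]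
  refine Finset.sum_eq_zero fun k _ => ?_
  by_cases hk : f k u₀ = 0
  · simp [hk]
  · simp [hv (g k) ⟨k, hk, rfl⟩]

theorem g_functionals_span_of_regular_element
    (F : Type*) [Field F]
    (U V W : Type*) [AddCommGroup U] [AddCommGroup V] [AddCommGroup W]
    [Module F U] [Module F V] [Module F W]
    [FiniteDimensional F U] [FiniteDimensional F V] [FiniteDimensional F W]
    (φ : U →ₗ[F] V →ₗ[F] W)
    (u₀ : U) (hreg : Function.Injective fun v : V => φ u₀ v)
    (r : ℕ) (f : Fin r → Module.Dual F U) (g : Fin r → Module.Dual F V)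
    (z : Fin r → W)
    (halg : ∀ u v, φ u v = ∑ k : Fin r, (f k u * g k v) • z k) :
    Submodule.span F (g '' {k : Fin r | f k u₀ ≠ 0}) = ⊤ :=
  g_functionals_span_of_regular_element_general F U V W φ u₀ hreg r f g z halg
end

section
/- Let φ : U × V → W be a bilinear map with dim U = m, dim V = n, rank exactly m + n (i.e., the minimal length of a bilinear algorithm for φ is m + n), trivial left kernel, and such that every basis of U contains a left φ-regular element. Then every bilinear algorithm for φ of length m + n is two-component. -/
/-!
Since the left kernel is trivial, the `f k` span `U*`; choose `I` with `(f i)_{i ∈ I}` a basis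
and let `u` be a left-regular member of the dual basis of `U`, say the one dual to `f i₀`.
Regularity of `u` makes the `g k` with `f k u ≠ 0`, all indexed by `{i₀} ∪ Iᶜ`, span `V*`.
If the `g k`, `k ∈ Iᶜ`, already span `V*`, then `I, Iᶜ` is the split, because
`|I| + |Iᶜ| = m + n` forces both spanning families to be bases. Otherwise they span a hyperplane,
already spanned by those with `f k u ≠ 0`; as `|Iᶜ| = n` exceeds its dimension and no `g k`
vanishes (a vanishing term could be dropped from an algorithm of minimal length), one of these,
`g j₀`, lies in the span of the others, and exchanging `i₀` with `j₀` gives the split.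
-/

variable {F U V W : Type*} [Field F]
  [AddCommGroup U] [AddCommGroup V] [AddCommGroup W]
  [Module F U] [Module F V] [Module F W]

/-- `(f, g, z)` is a bilinear algorithm of length `r` for `φ`. -/
def IsBilinearAlgorithm (φ : U →ₗ[F] V →ₗ[F] W) {r : ℕ}
    (f : Fin r → Module.Dual F U) (g : Fin r → Module.Dual F V)
    (z : Fin r → W) : Prop :=
  ∀ u v, φ u v = ∑ k : Fin r, (f k u * g k v) • z k

/-- A bilinear algorithm is two-component if the index set splits into `I` and `J` so that
the `f`'s indexed by `I` form a basis of `U*` and the `g`'s indexed by `J` form a basis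
of `V*`. -/
def IsTwoComponent {r : ℕ}
    (f : Fin r → Module.Dual F U) (g : Fin r → Module.Dual F V) : Prop :=
  ∃ I J : Finset (Fin r), Disjoint I J ∧ I ∪ J = Finset.univ ∧
    LinearIndependent F (fun i : I => f i) ∧ Submodule.span F (f '' I) = ⊤ ∧
    LinearIndependent F (fun j : J => g j) ∧ Submodule.span F (g '' J) = ⊤

open Submodule Module

theorem exists_finset_linearIndepOn_span_image_eq_top {ι M : Type*} [Finite ι] [AddCommGroup M]
    [Module F M] {v : ι → M} (hv : span F (Set.range v) = ⊤) :
    ∃ I : Finset ι, LinearIndepOn F v I ∧ span F (v '' I) = ⊤ := by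
  obtain ⟨I, -, -, hspan, hind⟩ :=
    exists_linearIndepOn_extension (K := F) (v := v) (linearIndepOn_empty F v)
      (Set.empty_subset .univ)
  refine ⟨(Set.toFinite I).toFinset, by simpa using hind, ?_⟩
  rw [eq_top_iff, ← hv, ← Set.image_univ, Set.Finite.coe_toFinset]
  exact span_le.2 hspan

section Exchange

variable {ι M : Type*} [DecidableEq ι] [AddCommGroup M] [Module F M]

theorem exists_mem_span_insert_image_erase {v : ι → M} {x : M} (hx₀ : x ≠ 0) {t : Finset ι}
    (hx : x ∈ span F (v '' t)) : ∃ j ∈ t, v j ∈ span F (insert x (v '' ↑(t.erase j))) := by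
  induction t using Finset.induction_on with
  | empty => simp_all
  | insert a t hat ih =>
    by_cases hxt : x ∈ span F (v '' t)
    · obtain ⟨j, hj, hvj⟩ := ih hxt
      refine ⟨j, Finset.mem_insert_of_mem hj, span_mono ?_ hvj⟩
      exact Set.insert_subset_insert (Set.image_mono (Finset.coe_subset.2
        (Finset.erase_subset_erase j (Finset.subset_insert a t))))
    · refine ⟨a, Finset.mem_insert_self a t, ?_⟩
      rw [Finset.coe_insert, Set.image_insert_eq] at hx
      rw [Finset.erase_insert hat]
      exact mem_span_insert_exchange hx hxt

theorem exists_mem_span_image_erase {v : ι → M} {s t : Finset ι} (hts : t ⊆ s)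
    (hspan : span F (v '' t) = span F (v '' s)) (hlt : finrank F (span F (v '' s)) < s.card)
    (hv : ∀ i ∈ s, v i ≠ 0) : ∃ j ∈ t, v j ∈ span F (v '' ↑(s.erase j)) := by
  by_cases hst : s ⊆ t
  · have hdep : ¬ LinearIndepOn F v s := fun hind => hlt.ne <| by
      rw [Set.image_eq_range, finrank_span_eq_card hind]
      simp
    simp only [linearIndepOn_iff_notMem_span, not_forall, not_not] at hdep
    obtain ⟨j, hj, hvj⟩ := hdep
    exact ⟨j, hst hj, by rwa [Finset.coe_erase]⟩
  · obtain ⟨j₁, hj₁s, hj₁t⟩ := Finset.not_subset.1 hst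
    obtain ⟨j, hjt, hvj⟩ := exists_mem_span_insert_image_erase (hv j₁ hj₁s)
      (hspan ▸ subset_span (Set.mem_image_of_mem v hj₁s))
    refine ⟨j, hjt, span_mono ?_ hvj⟩
    rintro _ (rfl | ⟨i, hi, rfl⟩)
    · exact Set.mem_image_of_mem v
        (Finset.mem_erase.2 ⟨fun h => hj₁t (h ▸ hjt), hj₁s⟩)
    · exact Set.mem_image_of_mem v (Finset.erase_subset_erase j hts hi)

theorem span_image_insert_erase_eq_top {v : ι → M} {I : Finset ι} {i₀ j₀ : ι} (hi₀ : i₀ ∈ I)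
    (hI : span F (v '' I) = ⊤) (hj₀ : v j₀ ∉ span F (v '' ↑(I.erase i₀))) :
    span F (v '' ↑(insert j₀ (I.erase i₀))) = ⊤ := by
  have hvi₀ : v i₀ ∈ span F (v '' ↑(insert j₀ (I.erase i₀))) := by
    rw [Finset.coe_insert, Set.image_insert_eq]
    refine mem_span_insert_exchange ?_ hj₀
    rw [← Set.image_insert_eq, ← Finset.coe_insert, Finset.insert_erase hi₀, hI]
    exact mem_top
  rw [eq_top_iff, ← hI, span_le]
  rintro _ ⟨i, hi, rfl⟩
  by_cases h : i = i₀
  · exact h ▸ hvi₀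
  · exact subset_span ⟨i, by simp [hi, h], rfl⟩

theorem eq_of_le_of_span_singleton_sup_eq_top {P Q : Submodule F M} (x : M) (hPQ : P ≤ Q)
    (hQ : Q ≠ ⊤) (h : span F {x} ⊔ P = ⊤) : P = Q := by
  have hx : x ∉ Q := fun hx => hQ <| top_le_iff.1 <|
    h ▸ sup_le ((span_singleton_le_iff_mem x Q).2 hx) hPQ
  have hdisj : span F {x} ⊓ Q = ⊥ :=
    disjoint_iff.1 (disjoint_span_singleton.2 fun hxQ => absurd hxQ hx).symm
  calc P = P ⊔ span F {x} ⊓ Q := by rw [hdisj, sup_bot_eq]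
    _ = (P ⊔ span F {x}) ⊓ Q := (sup_inf_assoc_of_le _ hPQ).symm
    _ = Q := by rw [sup_comm, h, top_inf_eq]

end Exchange

theorem exists_forall_mem_erase_apply_eq_zero [FiniteDimensional F U] {ι : Type*} [DecidableEq ι]
    {f : ι → Dual F U} {I : Finset ι} (hIf : LinearIndepOn F f I) (hI : span F (f '' I) = ⊤)
    {m : ℕ} (hm : finrank F U = m) {P : U → Prop} (hP : ∀ b : Basis (Fin m) F U, ∃ i, P (b i)) :
    ∃ i₀ ∈ I, ∃ u, P u ∧ ∀ i ∈ I.erase i₀, f i u = 0 := by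
  let B : Basis I F (Dual F U) :=
    Basis.mk hIf (by rw [← Set.image_eq_range, hI])
  -- `b` is the basis of `U` whose coordinate functionals are the `f i`, `i ∈ I`.
  let b : Basis I F U := B.dualBasis.map (evalEquiv F U).symm
  have hcard : Fintype.card I = m := by
    rw [← hm, ← Subspace.dual_finrank_eq, finrank_eq_card_basis B]
  obtain ⟨i, hi⟩ := hP (b.reindex (Fintype.equivFinOfCardEq hcard))
  set i₀ := (Fintype.equivFinOfCardEq hcard).symm i
  refine ⟨i₀, i₀.2, b i₀, by simpa using hi, fun i hi => ?_⟩
  have hB : B ⟨i, Finset.mem_of_mem_erase hi⟩ = f i := Basis.mk_apply hIf _ _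
  rw [← hB, Basis.map_apply, apply_evalEquiv_symm_apply, Basis.dualBasis_apply_self,
    if_neg (fun h => Finset.ne_of_mem_erase hi (congrArg Subtype.val h))]

theorem exists_mem_compl_apply_ne_zero_and_mem_span {ι : Type*} [Fintype ι] [DecidableEq ι]
    [FiniteDimensional F V] {f : ι → Dual F U} {g : ι → Dual F V} (hg : ∀ k, g k ≠ 0)
    {I : Finset ι} (hIc : Iᶜ.card = finrank F V) {i₀ : ι} {u : U}
    (hsupp : {k | f k u ≠ 0} ⊆ insert i₀ ↑Iᶜ) (hgu : span F (g '' {k | f k u ≠ 0}) = ⊤)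
    (hY : span F (g '' ↑Iᶜ) ≠ ⊤) :
    ∃ j₀ ∈ Iᶜ, f j₀ u ≠ 0 ∧ g j₀ ∈ span F (g '' ↑(Iᶜ.erase j₀)) := by
  classical
  set C := Iᶜ.filter (fun k => f k u ≠ 0)
  have hC : span F (g '' C) = span F (g '' ↑Iᶜ) := by
    refine eq_of_le_of_span_singleton_sup_eq_top (g i₀)
      (span_mono (Set.image_mono (Finset.coe_subset.2 (Finset.filter_subset _ Iᶜ)))) hY ?_
    rw [← span_insert, ← Set.image_insert_eq, eq_top_iff, ← hgu]
    refine span_mono (Set.image_mono fun k hk => ?_)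
    rcases hsupp hk with rfl | hkI
    · exact .inl rfl
    · exact .inr (Finset.mem_filter.2 ⟨hkI, hk⟩)
  have hlt : finrank F (span F (g '' ↑Iᶜ)) < Iᶜ.card := by
    rw [hIc, ← Subspace.dual_finrank_eq]
    exact Submodule.finrank_lt hY
  obtain ⟨j₀, hj₀C, hj₀⟩ :=
    exists_mem_span_image_erase (Finset.filter_subset _ _) hC hlt (fun k _ => hg k)
  exact ⟨j₀, (Finset.mem_filter.1 hj₀C).1, (Finset.mem_filter.1 hj₀C).2, hj₀⟩

theorem exists_span_image_eq_top_and_span_image_compl_eq_top {ι : Type*} [Fintype ι]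
    [DecidableEq ι] [FiniteDimensional F V] {f : ι → Dual F U} {g : ι → Dual F V}
    (hcard : Fintype.card ι = finrank F U + finrank F V) (hg : ∀ k, g k ≠ 0) {I : Finset ι}
    (hIf : LinearIndepOn F f I) (hI : span F (f '' I) = ⊤) {i₀ : ι} (hi₀ : i₀ ∈ I) {u : U}
    (hu : ∀ i ∈ I.erase i₀, f i u = 0) (hgu : span F (g '' {k | f k u ≠ 0}) = ⊤) :
    ∃ I' : Finset ι, span F (f '' I') = ⊤ ∧ span F (g '' ↑I'ᶜ) = ⊤ := by
  by_cases hY : span F (g '' ↑Iᶜ) = ⊤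
  · exact ⟨I, hI, hY⟩
  have hsupp : {k | f k u ≠ 0} ⊆ insert i₀ ↑Iᶜ := by
    intro k hk
    by_cases hkI : k ∈ I
    · by_cases hk₀ : k = i₀
      · exact .inl hk₀
      · exact absurd (hu k (Finset.mem_erase.2 ⟨hk₀, hkI⟩)) hk
    · exact .inr (Finset.mem_compl.2 hkI)
  have hIc : Iᶜ.card = finrank F V := by
    have hIcard : I.card = finrank F U := by
      rw [← Subspace.dual_finrank_eq, ← finrank_top, ← hI, Set.image_eq_range,
        finrank_span_eq_card hIf]
      simp
    rw [Finset.card_compl, hcard, hIcard, Nat.add_sub_cancel_left]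
  obtain ⟨j₀, hj₀I, hj₀u, hj₀⟩ :=
    exists_mem_compl_apply_ne_zero_and_mem_span hg hIc hsupp hgu hY
  refine ⟨insert j₀ (I.erase i₀), span_image_insert_erase_eq_top hi₀ hI ?_, ?_⟩
  · intro hmem
    have hle : span F (f '' ↑(I.erase i₀)) ≤ LinearMap.ker (Dual.eval F U u) :=
      span_le.2 (by rintro _ ⟨i, hi, rfl⟩; exact hu i hi)
    exact hj₀u (hle hmem)
  · have hj₀s : j₀ ∈ insert i₀ Iᶜ := Finset.mem_insert_of_mem hj₀I
    have hj₀s' : g j₀ ∈ span F (g '' ↑((insert i₀ Iᶜ).erase j₀)) :=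
      span_mono (Set.image_mono (Finset.coe_subset.2 (Finset.erase_subset_erase _
        (Finset.subset_insert _ _)))) hj₀
    rw [Finset.compl_insert, Finset.compl_erase, ← span_insert_eq_span hj₀s',
      ← Set.image_insert_eq, ← Finset.coe_insert, Finset.insert_erase hj₀s, eq_top_iff, ← hgu]
    exact span_mono (Set.image_mono (by simpa using hsupp))

theorem isTwoComponent_of_span_eq_top {r : ℕ}
    {f : Fin r → Dual F U} {g : Fin r → Dual F V} (hr : r = finrank F U + finrank F V)
    {I : Finset (Fin r)} (hf : span F (f '' I) = ⊤) (hg : span F (g '' ↑Iᶜ) = ⊤) :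
    IsTwoComponent f g := by
  have hfI : finrank F U ≤ I.card := by
    have := finrank_range_le_card (R := F) (fun i : (I : Set (Fin r)) => f i)
    rw [Set.finrank, ← Set.image_eq_range, hf, finrank_top, Subspace.dual_finrank_eq] at this
    simpa only [Finset.coe_sort_coe, Fintype.card_coe] using this
  have hgI : finrank F V ≤ Iᶜ.card := by
    have := finrank_range_le_card (R := F) (fun i : (↑Iᶜ : Set (Fin r)) => g i)
    rw [Set.finrank, ← Set.image_eq_range, hg, finrank_top, Subspace.dual_finrank_eq] at this
    simpa only [Finset.coe_sort_coe, Fintype.card_coe] using this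
  have hsum : I.card + Iᶜ.card = r := by rw [Finset.card_add_card_compl, Fintype.card_fin]
  refine ⟨I, Iᶜ, disjoint_compl_right, Finset.union_compl I,
    linearIndependent_of_top_le_span_of_card_eq_finrank ?_ ?_, hf,
    linearIndependent_of_top_le_span_of_card_eq_finrank ?_ ?_, hg⟩
  · rw [← hf, Set.image_eq_range]; rfl
  · simp only [Fintype.card_coe, Subspace.dual_finrank_eq]; omega
  · rw [← hg, Set.image_eq_range]; rfl
  · simp only [Fintype.card_coe, Subspace.dual_finrank_eq]; omega

namespace IsBilinearAlgorithm

variable {φ : U →ₗ[F] V →ₗ[F] W} {r : ℕ} {f : Fin r → Dual F U} {g : Fin r → Dual F V}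
  {z : Fin r → W}

theorem span_range_left_eq_top [FiniteDimensional F U] (halg : IsBilinearAlgorithm φ f g z)
    (hker : ∀ u : U, (∀ v : V, φ u v = 0) → u = 0) : span F (Set.range f) = ⊤ := by
  refine span_eq_top_of_ne_zero fun u hu => ?_
  by_contra! hf
  refine hu (hker u fun v => ?_)
  simp [halg u v, fun k => hf (f k) ⟨k, rfl⟩]

theorem span_image_right_eq_top [FiniteDimensional F V] (halg : IsBilinearAlgorithm φ f g z)
    {u : U} (hu : Function.Injective (φ u)) : span F (g '' {k | f k u ≠ 0}) = ⊤ := by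
  refine span_eq_top_of_ne_zero fun v hv => ?_
  by_contra! hg
  refine hv (hu ?_)
  rw [map_zero, halg u v]
  refine Finset.sum_eq_zero fun k _ => ?_
  by_cases hk : f k u = 0
  · simp [hk]
  · simp [hg (g k) ⟨k, hk, rfl⟩]

theorem comp_succAbove {f : Fin (r + 1) → Dual F U} {g : Fin (r + 1) → Dual F V}
    {z : Fin (r + 1) → W} (halg : IsBilinearAlgorithm φ f g z) {k : Fin (r + 1)} (hk : g k = 0) :
    IsBilinearAlgorithm φ (f ∘ k.succAbove) (g ∘ k.succAbove) (z ∘ k.succAbove) := by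
  intro u v
  simp [halg u v, Fin.sum_univ_succAbove _ k, hk]

theorem right_ne_zero (halg : IsBilinearAlgorithm φ f g z)
    (hmin : ∀ (r' : ℕ) (f' : Fin r' → Dual F U) (g' : Fin r' → Dual F V) (z' : Fin r' → W),
      IsBilinearAlgorithm φ f' g' z' → r ≤ r') (k : Fin r) : g k ≠ 0 := by
  obtain ⟨r, rfl⟩ : ∃ r', r = r' + 1 := ⟨r - 1, by have := k.pos; omega⟩
  intro hk
  have := hmin r _ _ _ (halg.comp_succAbove hk)
  omega

end IsBilinearAlgorithm

theorem optimal_algorithms_are_two_component_general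
    [FiniteDimensional F U] [FiniteDimensional F V]
    (m n : ℕ) (hm : Module.finrank F U = m) (hn : Module.finrank F V = n)
    (φ : U →ₗ[F] V →ₗ[F] W)
    (hrank_ge : ∀ (r : ℕ) (f : Fin r → Module.Dual F U)
      (g : Fin r → Module.Dual F V) (z : Fin r → W),
      IsBilinearAlgorithm φ f g z → m + n ≤ r)
    (hker : ∀ u : U, (∀ v : V, φ u v = 0) → u = 0)
    (hbasis : ∀ (b : Module.Basis (Fin m) F U),
      ∃ i, Function.Injective fun v : V => φ (b i) v)
    (f : Fin (m + n) → Module.Dual F U) (g : Fin (m + n) → Module.Dual F V)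
    (z : Fin (m + n) → W) (halg : IsBilinearAlgorithm φ f g z) :
    IsTwoComponent f g := by
  obtain ⟨I, hIf, hI⟩ :=
    exists_finset_linearIndepOn_span_image_eq_top (halg.span_range_left_eq_top hker)
  obtain ⟨i₀, hi₀, u, hu, hfu⟩ := exists_forall_mem_erase_apply_eq_zero hIf hI hm
    (P := fun u => Function.Injective fun v => φ u v) hbasis
  obtain ⟨I', hI'f, hI'g⟩ := exists_span_image_eq_top_and_span_image_compl_eq_top
    (by rw [Fintype.card_fin, hm, hn]) (halg.right_ne_zero hrank_ge) hIf hI hi₀ hfu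
    (halg.span_image_right_eq_top hu)
  exact isTwoComponent_of_span_eq_top (by rw [hm, hn]) hI'f hI'g

theorem optimal_algorithms_are_two_component
    [FiniteDimensional F U] [FiniteDimensional F V] [FiniteDimensional F W]
    (m n : ℕ) (hm : Module.finrank F U = m) (hn : Module.finrank F V = n)
    (φ : U →ₗ[F] V →ₗ[F] W)
    (hrank_le : ∃ (f : Fin (m + n) → Module.Dual F U)
      (g : Fin (m + n) → Module.Dual F V) (z : Fin (m + n) → W),
      IsBilinearAlgorithm φ f g z)
    (hrank_ge : ∀ (r : ℕ) (f : Fin r → Module.Dual F U)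
      (g : Fin r → Module.Dual F V) (z : Fin r → W),
      IsBilinearAlgorithm φ f g z → m + n ≤ r)
    (hker : ∀ u : U, (∀ v : V, φ u v = 0) → u = 0)
    (hbasis : ∀ (b : Module.Basis (Fin m) F U),
      ∃ i, Function.Injective fun v : V => φ (b i) v)
    (f : Fin (m + n) → Module.Dual F U) (g : Fin (m + n) → Module.Dual F V)
    (z : Fin (m + n) → W) (halg : IsBilinearAlgorithm φ f g z) :
    IsTwoComponent f g :=
  optimal_algorithms_are_two_component_general m n hm hn φ hrank_ge hker hbasis f g z halg
end

section
/- Let φ : U × V → W be a bilinear map of finite-dimensional F-vector spaces with dim U = m. If the rank (minimal bilinear algorithm length) of φ equals m + dim V and the left kernel of φ is trivial, then in any optimal algorithm ∑_{k=1}^{m+n} f_k ⊗ g_k ⊗ z_k, some m of the functionals f_k form a basis of U*. -/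
/-!
If all `f k` vanished at some `u ≠ 0`, the algorithm would give `φ u = 0`, contradicting the
trivial left kernel. Hence the `f k` span `U*`, and a spanning family of the `m`-dimensional
space `U*` contains a basis, necessarily of `m` members.
-/

open Module Submodule

theorem exists_finset_linearIndependent_span_eq_top {K V ι : Type*} [DivisionRing K]
    [AddCommGroup V] [Module K V] [FiniteDimensional K V] {v : ι → V}
    (hv : span K (Set.range v) = ⊤) :
    ∃ s : Finset ι, s.card = finrank K V ∧
      LinearIndependent K (fun i : s => v i) ∧ span K (v '' s) = ⊤ := by
  obtain ⟨b, -, -, hvb, hb⟩ :=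
    exists_linearIndepOn_extension (linearIndepOn_empty K v) (Set.empty_subset Set.univ)
  have : Finite b := hb.linearIndependent.finite
  obtain ⟨s, rfl⟩ := b.toFinite.exists_finset_coe
  have hspan : span K (v '' s) = ⊤ :=
    eq_top_iff.2 (hv ▸ span_le.2 (by simpa only [Set.image_univ] using hvb))
  refine ⟨s, ?_, hb, hspan⟩
  have hcard := finrank_span_eq_card hb.linearIndependent
  rw [← Set.image_eq_range, hspan, finrank_top] at hcard
  simpa using hcard.symm

theorem Module.Dual.span_range_eq_top_of_separating {K V ι : Type*} [Field K] [AddCommGroup V]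
    [Module K V] [FiniteDimensional K V] {f : ι → Dual K V}
    (hf : ∀ v : V, (∀ i, f i v = 0) → v = 0) :
    span K (Set.range f) = ⊤ :=
  span_eq_top_of_ne_zero fun v hv => by
    by_contra! h
    exact hv (hf v fun i => h _ ⟨i, rfl⟩)

theorem optimal_algorithm_contains_dual_basis_general
    (F : Type*) [Field F]
    (U V W : Type*) [AddCommGroup U] [AddCommGroup V] [AddCommGroup W]
    [Module F U] [Module F V] [Module F W]
    [FiniteDimensional F U]
    (m n : ℕ) (hm : Module.finrank F U = m)
    (φ : U →ₗ[F] V →ₗ[F] W)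
    (hker : ∀ u : U, (∀ v : V, φ u v = 0) → u = 0)
    (f : Fin (m + n) → Module.Dual F U) (g : Fin (m + n) → Module.Dual F V)
    (z : Fin (m + n) → W)
    (halg : ∀ u v, φ u v = ∑ k : Fin (m + n), (f k u * g k v) • z k) :
    ∃ s : Finset (Fin (m + n)), s.card = m ∧
      LinearIndependent F (fun i : s => f i) ∧
      Submodule.span F (f '' s) = ⊤ := by
  have hsep : ∀ u : U, (∀ k, f k u = 0) → u = 0 := fun u hu =>
    hker u fun v => by simp [halg, hu]
  obtain ⟨s, hcard, hli, hspan⟩ :=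
    exists_finset_linearIndependent_span_eq_top (Dual.span_range_eq_top_of_separating hsep)
  exact ⟨s, by rw [hcard, Subspace.dual_finrank_eq, hm], hli, hspan⟩

theorem optimal_algorithm_contains_dual_basis
    (F : Type*) [Field F]
    (U V W : Type*) [AddCommGroup U] [AddCommGroup V] [AddCommGroup W]
    [Module F U] [Module F V] [Module F W]
    [FiniteDimensional F U] [FiniteDimensional F V] [FiniteDimensional F W]
    (m n : ℕ) (hm : Module.finrank F U = m) (hn : Module.finrank F V = n)
    (φ : U →ₗ[F] V →ₗ[F] W)
    (hrank_ge : ∀ (r : ℕ) (f : Fin r → Module.Dual F U)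
      (g : Fin r → Module.Dual F V) (z : Fin r → W),
      (∀ u v, φ u v = ∑ k : Fin r, (f k u * g k v) • z k) → m + n ≤ r)
    (hker : ∀ u : U, (∀ v : V, φ u v = 0) → u = 0)
    (f : Fin (m + n) → Module.Dual F U) (g : Fin (m + n) → Module.Dual F V)
    (z : Fin (m + n) → W)
    (halg : ∀ u v, φ u v = ∑ k : Fin (m + n), (f k u * g k v) • z k) :
    ∃ s : Finset (Fin (m + n)), s.card = m ∧
      LinearIndependent F (fun i : s => f i) ∧
      Submodule.span F (f '' s) = ⊤ :=
  optimal_algorithm_contains_dual_basis_general F U V W m n hm φ hker f g z halg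
end

section
/- The bilinear rank of multiplication in the real quaternions ℍ is at most 8: there exist linear functionals f_k, g_k : ℍ → ℝ and quaternions z_k, k = 1,…,8, such that uv = ∑_{k=1}^8 f_k(u) g_k(v) z_k for all u, v ∈ ℍ. Explicitly, one may take the algorithm from the two-component construction with u_i = v_i running over 1, i, j, k, z′ and z″ as given by the ±(i+j+k) pattern with α = β = γ = 1. -/
/-!
If a bilinear map `B` sends every pair of basis vectors `(b i, c j)` into the span of two vectors
`z' i` and `z'' j`, the first depending only on `i` and the second only on `j`, then bilinearity
regroups `B u v` into `|ι| + |κ|` rank-one terms, each a linear form in `u` times a linear form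
in `v` times a fixed vector.
For the quaternions with `b = c = (1, i, j, k)`, the eight vectors `1 ± i ± j ± k` work: `z' i`
has an even number of minus signs, `z'' j` an odd number, and each product of basis vectors is
`(± z' i ± z'' j) / 2`.
-/

open Quaternion

section TwoComponent

variable {R M N P ι κ : Type*} [CommSemiring R] [AddCommMonoid M] [Module R M]
  [AddCommMonoid N] [Module R N] [AddCommMonoid P] [Module R P] [Fintype ι] [Fintype κ]

theorem LinearMap.apply_eq_sum_of_apply_basis_eq (B : M →ₗ[R] N →ₗ[R] P)
    (b : Module.Basis ι R M) (c : Module.Basis κ R N) (z' : ι → P) (z'' : κ → P)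
    (lam mu : ι → κ → R) (h : ∀ i j, B (b i) (c j) = lam i j • z' i + mu i j • z'' j)
    (u : M) (v : N) :
    B u v = ∑ i, (b.coord i u * (∑ j, lam i j • c.coord j) v) • z' i +
      ∑ j, ((∑ i, mu i j • b.coord i) u * c.coord j v) • z'' j := by
  have expand : B u v = ∑ i, ∑ j, (b.repr u i * c.repr v j) • B (b i) (c j) := by
    simp only [← LinearMap.sum_repr_mul_repr_mul b c u v, smul_smul, mul_zero, zero_mul,
      zero_smul, Finset.sum_const_zero, implies_true, Finsupp.sum_fintype]
  simp only [expand, h, smul_add, Finset.sum_add_distrib, smul_smul, LinearMap.sum_apply,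
    LinearMap.smul_apply, Module.Basis.coord_apply, smul_eq_mul, Finset.mul_sum, Finset.sum_mul]
  rw [Finset.sum_comm (f := fun i j => (b.repr u i * c.repr v j * mu i j) • z'' j)]
  simp only [← Finset.sum_smul]
  congr 1 <;> refine Finset.sum_congr rfl fun _ _ => ?_ <;> congr 1 <;>
    exact Finset.sum_congr rfl fun _ _ => by ring

end TwoComponent

namespace Quaternion

local notation "e" => QuaternionAlgebra.basisOneIJK (-1 : ℝ) 0 (-1)

def evenSign : Fin 4 → ℍ[ℝ] :=
  ![⟨1, 1, 1, 1⟩, ⟨1, 1, -1, -1⟩, ⟨1, -1, 1, -1⟩, ⟨1, -1, -1, 1⟩]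

def oddSign : Fin 4 → ℍ[ℝ] :=
  ![⟨1, -1, -1, -1⟩, ⟨1, -1, 1, 1⟩, ⟨1, 1, -1, 1⟩, ⟨1, 1, 1, -1⟩]

noncomputable def evenSignCoeff : Matrix (Fin 4) (Fin 4) ℝ :=
  (1 / 2 : ℝ) • !![1, 1, 1, 1; 1, -1, -1, 1; 1, 1, -1, -1; 1, -1, 1, -1]

noncomputable def oddSignCoeff : Matrix (Fin 4) (Fin 4) ℝ :=
  (1 / 2 : ℝ) • !![1, -1, -1, -1; -1, -1, 1, -1; -1, -1, -1, 1; -1, 1, -1, -1]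

theorem basisOneIJK_mul_basisOneIJK (i j : Fin 4) :
    e i * e j = evenSignCoeff i j • evenSign i + oddSignCoeff i j • oddSign j := by
  -- Distribute the projections first: once `evenSign` is unfolded, its entries are typed as
  -- `QuaternionAlgebra` rather than `ℍ[ℝ]` and the `Quaternion` simp lemmas no longer match.
  ext <;>
    simp only [re_add, imI_add, imJ_add, imK_add, re_smul, imI_smul, imJ_smul, imK_smul,
      smul_eq_mul] <;>
    fin_cases i <;> fin_cases j <;>
    simp [QuaternionAlgebra.basisOneIJK, evenSign, oddSign, evenSignCoeff, oddSignCoeff] <;> norm_num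

end Quaternion

theorem quaternion_rank_le_eight_explicit :
    ∃ (f g : Fin 8 → Module.Dual ℝ ℍ[ℝ]) (z : Fin 8 → ℍ[ℝ]),
      (∀ k : Fin 8, z k ∈
        ({⟨1,1,1,1⟩, ⟨1,1,-1,-1⟩, ⟨1,-1,1,-1⟩, ⟨1,-1,-1,1⟩,
          ⟨1,-1,-1,-1⟩, ⟨1,-1,1,1⟩, ⟨1,1,-1,1⟩, ⟨1,1,1,-1⟩} : Set ℍ[ℝ])) ∧
      ∀ u v : ℍ[ℝ], u * v = ∑ k : Fin 8, (f k u * g k v) • z k := by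
  let e := QuaternionAlgebra.basisOneIJK (-1 : ℝ) 0 (-1)
  let z : Fin 8 → ℍ[ℝ] := Fin.append evenSign oddSign
  -- the eight quaternions of the statement are definitionally `z 0, …, z 7`
  have hz : ∀ k, z k ∈ ({z 0, z 1, z 2, z 3, z 4, z 5, z 6, z 7} : Set ℍ[ℝ]) := by
    intro k
    fin_cases k <;> simp
  refine ⟨Fin.append (fun i => e.coord i) (fun j => ∑ i, oddSignCoeff i j • e.coord i),
    Fin.append (fun i => ∑ j, evenSignCoeff i j • e.coord j) (fun j => e.coord j), z, hz,
    fun u v => ?_⟩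
  rw [Fin.sum_univ_add (a := 4) (b := 4)]
  simp only [z, Fin.append_left, Fin.append_right]
  exact (LinearMap.mul ℝ ℍ[ℝ]).apply_eq_sum_of_apply_basis_eq e e evenSign oddSign _ _
    basisOneIJK_mul_basisOneIJK u v
end
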